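/- Let $B:[0,1]\to M_2(\mathbb{C})$ and $a:[0,1]\to\mathbb{C}$ be continuous. For $t>0$ set $D_t(s)=B(s)+t\,\mathrm{diag}(a(s),-a(s))$, and let $f_t:[0,1]\to M_2(\mathbb{C})$ be differentiable with $f_t'(s)=-D_t(s)\,f_t(s)$ for all $s\in[0,1]$ and $f_t(0)=I_2$. Then there exists a constant $C>0$, independent of $t$, such that for every $t>0$: $\log\|f_t(1)\|\le t\int_0^1|\mathrm{Re}\,a(s)|\,ds+C$, where $\|\cdot\|$ is the $L^2$-operator norm on $M_2(\mathbb{C})$. -/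

import Mathlib

/-!
Energy estimate for the columns `u(s) = f_t(s) v`: `d/ds ‖u‖² = -2 Re⟪D_t u, u⟫`. The diagonal
part contributes `-2t Re a (|u₀|² - |u₁|²) ≤ 2t |Re a| ‖u‖²` (the imaginary part of `a` is
skew-adjoint and drops out), and `B` contributes at most `2‖B‖ ‖u‖²`. Grönwall's inequality then
gives `‖f_t(1)‖ ≤ exp (∫₀¹ ‖B‖ + t ∫₀¹ |Re a|)`, so `C = ∫₀¹ ‖B‖ + 1` works.
-/

open scoped Matrix Matrix.Norms.L2Operator
open Set Real RCLike
open scoped InnerProductSpace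

section Gronwall

variable {𝕜 E : Type*} [RCLike 𝕜] [NormedAddCommGroup E] [InnerProductSpace 𝕜 E]
  [NormedSpace ℝ E]

theorem HasDerivAt.norm_sq_re_inner {u : ℝ → E} {u' : E} {x : ℝ}
    (hu : HasDerivAt u u' x) : HasDerivAt (‖u ·‖ ^ 2) (2 * re ⟪u', u x⟫_𝕜) x := by
  have h := (reCLM (K := 𝕜)).hasFDerivAt.comp_hasDerivAt x (hu.inner 𝕜 hu)
  have hfun : (reCLM ∘ fun t => ⟪u t, u t⟫_𝕜) = (‖u ·‖ ^ 2) := by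
    funext s; simp
  rw [hfun] at h
  refine h.congr_deriv ?_
  rw [reCLM_apply, map_add, inner_re_symm (u x)]; ring

theorem norm_le_exp_sub_mul_of_re_inner_le {u u' : ℝ → E} {ψ w : ℝ → ℝ} {a b : ℝ}
    (hab : a ≤ b) (hu : ContinuousOn u (Icc a b)) (hu' : ∀ s ∈ Ioo a b, HasDerivAt u (u' s) s)
    (hψ : ContinuousOn ψ (Icc a b)) (hψ' : ∀ s ∈ Ioo a b, HasDerivAt ψ (w s) s)
    (hw : ∀ s ∈ Ioo a b, re ⟪u' s, u s⟫_𝕜 ≤ w s * ‖u s‖ ^ 2) :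
    ‖u b‖ ≤ exp (ψ b - ψ a) * ‖u a‖ := by
  set G : ℝ → ℝ := fun s => exp (-(2 * ψ s)) * ‖u s‖ ^ 2
  have hG : AntitoneOn G (Icc a b) := by
    refine antitoneOn_of_hasDerivWithinAt_nonpos (convex_Icc a b)
      (f' := fun s => exp (-(2 * ψ s)) * -(2 * w s) * ‖u s‖ ^ 2
        + exp (-(2 * ψ s)) * (2 * re ⟪u' s, u s⟫_𝕜))
      (by fun_prop) (fun s hs => ?_) (fun s hs => ?_)
    all_goals rw [interior_Icc] at hs
    · exact ((((hψ' s hs).const_mul 2).neg.exp).mul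
        (hu' s hs).norm_sq_re_inner).hasDerivWithinAt
    · have := hw s hs
      have := exp_pos (-(2 * ψ s))
      nlinarith
  have hGba : G b ≤ G a := hG ⟨le_rfl, hab⟩ ⟨hab, le_rfl⟩ hab
  have hsq : ‖u b‖ ^ 2 ≤ (exp (ψ b - ψ a) * ‖u a‖) ^ 2 :=
    calc ‖u b‖ ^ 2 = exp (2 * ψ b) * G b := by simp only [G, ← mul_assoc, ← exp_add]; simp
      _ ≤ exp (2 * ψ b) * G a := by gcongr
      _ = (exp (ψ b - ψ a) * ‖u a‖) ^ 2 := by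
        simp only [G, mul_pow, ← exp_nat_mul, ← mul_assoc, ← exp_add]; ring_nf
  exact le_of_sq_le_sq hsq (by positivity)

theorem norm_le_exp_integral_mul_of_re_inner_le {u u' : ℝ → E} {w : ℝ → ℝ} {a b : ℝ}
    (hab : a ≤ b) (hu : ContinuousOn u (Icc a b)) (hu' : ∀ s ∈ Ioo a b, HasDerivAt u (u' s) s)
    (hw_cont : ContinuousOn w (Icc a b))
    (hw : ∀ s ∈ Ioo a b, re ⟪u' s, u s⟫_𝕜 ≤ w s * ‖u s‖ ^ 2) :
    ‖u b‖ ≤ exp (∫ s in a..b, w s) * ‖u a‖ := by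
  have hprim : ContinuousOn (fun x => ∫ s in a..x, w s) (Icc a b) := by
    simpa [uIcc_of_le hab] using intervalIntegral.continuousOn_primitive_interval
      (μ := MeasureTheory.volume) (a := a) (b := b)
      (by simpa [uIcc_of_le hab] using hw_cont.integrableOn_Icc)
  have hderiv : ∀ s ∈ Ioo a b, HasDerivAt (fun x => ∫ s in a..x, w s) (w s) s := fun s hs =>
    intervalIntegral.integral_hasDerivAt_right
      ((hw_cont.mono (Icc_subset_Icc_right hs.2.le)).intervalIntegrable_of_Icc hs.1.le)
      ((hw_cont.mono Ioo_subset_Icc_self).stronglyMeasurableAtFilter isOpen_Ioo s hs)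
      (hw_cont.continuousAt (Icc_mem_nhds hs.1 hs.2))
  simpa using norm_le_exp_sub_mul_of_re_inner_le hab hu hu' hprim hderiv hw

end Gronwall

theorem HasDerivWithinAt.toEuclideanCLM_apply {n : Type*} [Fintype n] [DecidableEq n]
    {F : ℝ → Matrix n n ℂ} {F' : Matrix n n ℂ} {s : Set ℝ} {x : ℝ} (hF : HasDerivWithinAt F F' s x) (v : EuclideanSpace ℂ n) :
    HasDerivWithinAt (fun y => Matrix.toEuclideanCLM (𝕜 := ℂ) (F y) v)
      (Matrix.toEuclideanCLM (𝕜 := ℂ) F' v) s x := by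
  let L : Matrix n n ℂ →L[ℂ] EuclideanSpace ℂ n :=
    LinearMap.toContinuousLinearMap
      ((ContinuousLinearMap.apply ℂ (EuclideanSpace ℂ n) v : _ →ₗ[ℂ] _).comp
        (Matrix.toEuclideanCLM (𝕜 := ℂ) (n := n)).toAlgEquiv.toLinearMap)
  exact (L.restrictScalars ℝ).hasFDerivAt.comp_hasDerivWithinAt x hF

namespace Matrix

section Dissipativity

variable {𝕜 n : Type*} [RCLike 𝕜] [Fintype n] [DecidableEq n]

lemma re_inner_toEuclideanCLM_diagonal (d : n → 𝕜) (v : EuclideanSpace 𝕜 n) :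
    re ⟪toEuclideanCLM (𝕜 := 𝕜) (diagonal d) v, v⟫_𝕜 = ∑ i, re (d i) * ‖v i‖ ^ 2 := by
  rw [PiLp.inner_apply, map_sum]
  refine Finset.sum_congr rfl fun i _ => ?_
  simp only [ofLp_toEuclideanCLM, mulVec_diagonal]
  rw [← smul_eq_mul, inner_smul_left, inner_self_eq_norm_sq_to_K, ← ofReal_pow, re_mul_ofReal,
    conj_re]

lemma abs_re_inner_toEuclideanCLM_diagonal_le {d : n → 𝕜} {c : ℝ} (hd : ∀ i, |re (d i)| ≤ c)
    (v : EuclideanSpace 𝕜 n) :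
    |re ⟪toEuclideanCLM (𝕜 := 𝕜) (diagonal d) v, v⟫_𝕜| ≤ c * ‖v‖ ^ 2 := by
  rw [re_inner_toEuclideanCLM_diagonal, EuclideanSpace.norm_sq_eq, Finset.mul_sum]
  refine (Finset.abs_sum_le_sum_abs _ _).trans (Finset.sum_le_sum fun i _ => ?_)
  rw [abs_mul, abs_sq]
  exact mul_le_mul_of_nonneg_right (hd i) (sq_nonneg _)

lemma re_inner_toEuclideanCLM_neg_add_smul_diagonal_le (B : Matrix n n 𝕜) {d : n → 𝕜}
    {c t : ℝ} (ht : 0 ≤ t) (hd : ∀ i, |re (d i)| ≤ c) (v : EuclideanSpace 𝕜 n) :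
    re ⟪toEuclideanCLM (𝕜 := 𝕜) (-(B + (t : 𝕜) • diagonal d)) v, v⟫_𝕜
      ≤ (‖B‖ + t * c) * ‖v‖ ^ 2 := by
  have hB : -re ⟪toEuclideanCLM (𝕜 := 𝕜) B v, v⟫_𝕜 ≤ ‖B‖ * ‖v‖ ^ 2 :=
    calc -re ⟪toEuclideanCLM (𝕜 := 𝕜) B v, v⟫_𝕜 ≤ ‖toEuclideanCLM (𝕜 := 𝕜) B v‖ * ‖v‖ := by
          simpa using re_inner_le_norm (-toEuclideanCLM (𝕜 := 𝕜) B v) v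
      _ ≤ ‖B‖ * ‖v‖ * ‖v‖ := by gcongr; exact (toEuclideanCLM (𝕜 := 𝕜) B).le_opNorm v
      _ = ‖B‖ * ‖v‖ ^ 2 := by ring
  have hD : -(t * re ⟪toEuclideanCLM (𝕜 := 𝕜) (diagonal d) v, v⟫_𝕜) ≤ t * (c * ‖v‖ ^ 2) := by
    rw [← mul_neg]
    exact mul_le_mul_of_nonneg_left
      ((neg_le_abs _).trans (abs_re_inner_toEuclideanCLM_diagonal_le hd v)) ht
  rw [map_neg, map_add, map_smul, _root_.neg_apply, _root_.add_apply, _root_.smul_apply,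
    inner_neg_left, inner_add_left, inner_smul_left, conj_ofReal, map_neg, map_add,
    re_ofReal_mul]
  linarith

end Dissipativity

variable {n : Type*} [Fintype n] [DecidableEq n]

theorem norm_le_exp_integral_mul_of_hasDerivWithinAt {F M : ℝ → Matrix n n ℂ} {w : ℝ → ℝ}
    {a b : ℝ} (hab : a ≤ b) (hF : ∀ s ∈ Icc a b, HasDerivWithinAt F (M s * F s) (Icc a b) s)
    (hw_cont : ContinuousOn w (Icc a b))
    (hM : ∀ s ∈ Ioo a b, ∀ v, re ⟪toEuclideanCLM (𝕜 := ℂ) (M s) v, v⟫_ℂ ≤ w s * ‖v‖ ^ 2) :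
    ‖F b‖ ≤ exp (∫ s in a..b, w s) * ‖F a‖ := by
  refine ContinuousLinearMap.opNorm_le_bound _ (by positivity) fun v => ?_
  have hu : ∀ s ∈ Icc a b, HasDerivWithinAt (fun s => toEuclideanCLM (𝕜 := ℂ) (F s) v)
      (toEuclideanCLM (𝕜 := ℂ) (M s) (toEuclideanCLM (𝕜 := ℂ) (F s) v)) (Icc a b) s :=
    fun s hs => by simpa [map_mul] using (hF s hs).toEuclideanCLM_apply v
  calc ‖toEuclideanCLM (𝕜 := ℂ) (F b) v‖
      ≤ exp (∫ s in a..b, w s) * ‖toEuclideanCLM (𝕜 := ℂ) (F a) v‖ :=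
        norm_le_exp_integral_mul_of_re_inner_le hab (fun s hs => (hu s hs).continuousWithinAt)
          (fun s hs => (hu s (Ioo_subset_Icc_self hs)).hasDerivAt (Icc_mem_nhds hs.1 hs.2))
          hw_cont (fun s hs => hM s hs _)
    _ ≤ exp (∫ s in a..b, w s) * (‖F a‖ * ‖v‖) := by
        gcongr; exact (toEuclideanCLM (𝕜 := ℂ) (F a)).le_opNorm v
    _ = exp (∫ s in a..b, w s) * ‖F a‖ * ‖v‖ := by ring

end Matrix

/-- With `D_t(s) = B(s) + t·diag(a(s), -a(s))` and `f_t` solving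
`f_t' = -D_t f_t`, `f_t(0) = I₂`, there is a constant `C > 0` independent of `t` with
`log ‖f_t(1)‖ ≤ t ∫₀¹ |Re a(s)| ds + C` for all `t > 0`. -/
theorem ode_log_norm_bound
    (B : ℝ → Matrix (Fin 2) (Fin 2) ℂ) (hB : ContinuousOn B (Icc 0 1))
    (a : ℝ → ℂ) (ha : ContinuousOn a (Icc 0 1))
    (f : ℝ → ℝ → Matrix (Fin 2) (Fin 2) ℂ)
    (hf : ∀ t > (0 : ℝ), ∀ s ∈ Icc (0 : ℝ) 1,
      HasDerivWithinAt (f t)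
        (-((B s + (t : ℂ) • Matrix.diagonal ![a s, -a s]) * f t s)) (Icc 0 1) s)
    (hf0 : ∀ t > (0 : ℝ), f t 0 = 1) :
    ∃ C > (0 : ℝ), ∀ t > (0 : ℝ),
      Real.log ‖f t 1‖ ≤ t * (∫ s in (0 : ℝ)..1, |(a s).re|) + C := by
  have hre : ContinuousOn (fun s => |(a s).re|) (Icc 0 1) := by fun_prop
  have hIB : 0 ≤ ∫ s in (0 : ℝ)..1, ‖B s‖ :=
    intervalIntegral.integral_nonneg zero_le_one fun _ _ => norm_nonneg _
  refine ⟨(∫ s in (0 : ℝ)..1, ‖B s‖) + 1, by positivity, fun t ht => ?_⟩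
  have hnorm : ‖f t 1‖ ≤ exp (∫ s in (0 : ℝ)..1, ‖B s‖ + t * |(a s).re|) := by
    simpa [hf0 t ht] using Matrix.norm_le_exp_integral_mul_of_hasDerivWithinAt zero_le_one
      (fun s hs => (hf t ht s hs).congr_deriv (neg_mul _ _).symm) (by fun_prop)
      (fun s _ => Matrix.re_inner_toEuclideanCLM_neg_add_smul_diagonal_le (B s) ht.le
        (Fin.forall_fin_two.2 ⟨le_rfl, by simp⟩))
  rw [intervalIntegral.integral_add (hB.norm.intervalIntegrable_of_Icc zero_le_one)
    ((hre.intervalIntegrable_of_Icc zero_le_one).const_mul t),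
    intervalIntegral.integral_const_mul] at hnorm
  rcases (norm_nonneg (f t 1)).eq_or_lt with h0 | hpos
  · have hIa : 0 ≤ ∫ s in (0 : ℝ)..1, |(a s).re| :=
      intervalIntegral.integral_nonneg zero_le_one fun _ _ => abs_nonneg _
    rw [← h0, log_zero]
    linarith [mul_nonneg ht.le hIa]
  · rw [log_le_iff_le_exp hpos]; exact hnorm.trans (exp_le_exp.2 (by linarith))
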